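/- arXiv:0902.4339 — 2 statements merged into one kernel-verified Lean document; each statement's English description precedes it below -/
import Mathlib

section
/- Let p : Y → X be a continuous map between locally compact Hausdorff spaces, let ξ : Y → ℝ≥0 be an upper semicontinuous function vanishing at infinity (e.g. the pointwise norm of a section vanishing at infinity of a field of Banach spaces). Then the function X → ℝ, x ↦ sup_{y ∈ p⁻¹(x)} ξ(y) (with sup over the empty set defined to be 0) is upper semicontinuous. -/
/-- If `p : Y → X` is continuous between locally compact Hausdorff spaces and
`ξ : Y → ℝ` is nonnegative, upper semicontinuous and vanishing at infinity, then
`x ↦ sup_{y ∈ p⁻¹(x)} ξ(y)` (sup over the empty set being `0`) is upper semicontinuous. -/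
theorem pushforward_sup_upperSemicontinuous
    {X Y : Type*} [TopologicalSpace X] [TopologicalSpace Y]
    [LocallyCompactSpace X] [T2Space X] [LocallyCompactSpace Y] [T2Space Y]
    (p : Y → X) (hp : Continuous p)
    (ξ : Y → ℝ) (hnn : ∀ y, 0 ≤ ξ y) (husc : UpperSemicontinuous ξ)
    (hvan : ∀ ε > 0, IsCompact {y | ε ≤ ξ y}) :
    UpperSemicontinuous (fun x => ⨆ y : (p ⁻¹' {x} : Set Y), ξ (y : Y)) := by
  -- Step 1: ξ is globally bounded above.
  obtain ⟨B, hB⟩ : ∃ B : ℝ, ∀ y, ξ y ≤ B := by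
    have hK : IsCompact {y | (1:ℝ) ≤ ξ y} := hvan 1 one_pos
    have hopen : ∀ n : ℕ, IsOpen {y | ξ y < (n:ℝ)} := by
      intro n
      have := husc.isOpen_preimage (n : ℝ)
      simpa [Set.preimage, Set.Iio] using this
    have hcover : {y | (1:ℝ) ≤ ξ y} ⊆ ⋃ n : ℕ, {y | ξ y < (n:ℝ)} := by
      intro y _
      obtain ⟨n, hn⟩ := exists_nat_gt (ξ y)
      exact Set.mem_iUnion.2 ⟨n, hn⟩
    obtain ⟨t, ht⟩ := hK.elim_finite_subcover _ hopen hcover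
    refine ⟨max 1 ((t.sup id : ℕ) : ℝ), fun y => ?_⟩
    by_cases hy : (1:ℝ) ≤ ξ y
    · obtain ⟨n, hnt, hn⟩ := Set.mem_iUnion₂.1 (ht hy)
      have h1 : (n:ℝ) ≤ ((t.sup id : ℕ) : ℝ) :=
        Nat.cast_le.2 (Finset.le_sup (f := id) hnt)
      exact le_trans hn.le (le_trans h1 (le_max_right _ _))
    · exact le_trans (not_le.1 hy).le (le_max_left _ _)
  intro x₀ c hc
  set f := fun x => ⨆ y : (p ⁻¹' {x} : Set Y), ξ (y : Y) with hf
  have hf0 : 0 ≤ f x₀ := Real.iSup_nonneg fun y => hnn _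
  set c' := (f x₀ + c) / 2 with hc'
  have hc'1 : f x₀ < c' := by dsimp only [c']; linarith
  have hc'2 : c' < c := by dsimp only [c']; linarith
  have hc'pos : 0 < c' := by dsimp only [c']; linarith
  have hK : IsCompact {y | c' ≤ ξ y} := hvan c' hc'pos
  have hx₀ : x₀ ∉ p '' {y | c' ≤ ξ y} := by
    rintro ⟨y, hy, rfl⟩
    have hbdd : BddAbove (Set.range fun z : (p ⁻¹' {p y} : Set Y) => ξ (z : Y)) :=
      ⟨B, by rintro _ ⟨z, rfl⟩; exact hB _⟩
    have hle : ξ y ≤ f (p y) := le_ciSup hbdd (⟨y, rfl⟩ : (p ⁻¹' {p y} : Set Y))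
    have : c' ≤ f (p y) := le_trans hy hle
    exact absurd hc'1 (not_lt.2 this)
  have hclosed : IsClosed (p '' {y | c' ≤ ξ y}) := (hK.image hp).isClosed
  have hU : (p '' {y | c' ≤ ξ y})ᶜ ∈ nhds x₀ := hclosed.isOpen_compl.mem_nhds hx₀
  filter_upwards [hU] with x hx
  have hle : ∀ z : (p ⁻¹' {x} : Set Y), ξ (z : Y) ≤ c' := by
    rintro ⟨y, hy⟩
    by_contra h
    exact hx ⟨y, (not_le.1 h).le, hy⟩
  exact lt_of_le_of_lt (Real.iSup_le hle hc'pos.le) hc'2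
end

section
/- Let G be a topological group acting continuously on a locally compact Hausdorff space, let H ≤ G be a subgroup, and let B be a Banach algebra on which H acts by isometric algebra automorphisms. Then the set Ind_H^G B of continuous functions f : G → B satisfying f(g h⁻¹) = h · f(g) for all g ∈ G, h ∈ H, and such that gH ↦ ‖f(g)‖ vanishes at infinity on G/H (note ‖f(g)‖ depends only on gH), is a closed subalgebra of the Banach algebra of bounded continuous B-valued functions on G, and the formula (g·f)(g') = f(g⁻¹ g') defines an action of G on Ind_H^G B by isometric algebra automorphisms. -/
/-!
The norm of an `H`-equivariant function is constant on the cosets `gH` (because `H` acts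
isometrically), so it descends to a continuous function on `G ⧸ H`; vanishing at infinity makes
that function bounded. Everything else is pointwise: the equivariance law is preserved by the
algebra operations and, since the `ρ h` are isometries, by uniform limits; the superlevel sets
`{ε ≤ ‖f‖}` of sums, products, scalar multiples and uniform limits are controlled by superlevel
sets of the factors; and left translation by `g₀` moves the image of a superlevel set in `G ⧸ H`
by the homeomorphism `g₀ • ·`.
-/

open Set

section

variable {X Y E : Type*} [TopologicalSpace Y] [SeminormedAddCommGroup E]

def VanishesAtInftyAlong (π : X → Y) (f : X → E) : Prop :=
  ∀ ε > 0, IsCompact (closure (π '' {x | ε ≤ ‖f x‖}))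

namespace VanishesAtInftyAlong

variable {π : X → Y} {f f' : X → E}

theorem of_superlevel_subset (hf' : VanishesAtInftyAlong π f')
    (h : ∀ ε > 0, ∃ δ > 0, {x | ε ≤ ‖f x‖} ⊆ {x | δ ≤ ‖f' x‖}) :
    VanishesAtInftyAlong π f := fun ε hε ↦ by
  obtain ⟨δ, hδ, hsub⟩ := h ε hε
  exact (hf' δ hδ).of_isClosed_subset isClosed_closure (closure_mono (image_mono hsub))

theorem of_norm_le_mul (hf' : VanishesAtInftyAlong π f') (C : ℝ)
    (h : ∀ x, ‖f x‖ ≤ C * ‖f' x‖) : VanishesAtInftyAlong π f := by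
  have hC : 0 < max C 1 := lt_max_of_lt_right one_pos
  refine hf'.of_superlevel_subset fun ε hε ↦ ⟨ε / max C 1, by positivity, fun x hx ↦ ?_⟩
  rw [mem_ofPred_eq, div_le_iff₀' hC]
  exact hx.trans ((h x).trans (by gcongr; exact le_max_left C 1))

theorem add (hf : VanishesAtInftyAlong π f) (hf' : VanishesAtInftyAlong π f') :
    VanishesAtInftyAlong π (f + f') := fun ε hε ↦ by
  have hsub : {x | ε ≤ ‖(f + f') x‖} ⊆ {x | ε / 2 ≤ ‖f x‖} ∪ {x | ε / 2 ≤ ‖f' x‖} := by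
    intro x hx
    by_contra! hlt
    simp only [mem_union, mem_ofPred_eq, Pi.add_apply, not_or, not_le] at hlt hx
    linarith [norm_add_le (f x) (f' x)]
  refine ((hf _ (half_pos hε)).union (hf' _ (half_pos hε))).of_isClosed_subset isClosed_closure ?_
  rw [← closure_union, ← image_union]
  exact closure_mono (image_mono hsub)

theorem of_forall_dist_le
    (h : ∀ ε > 0, ∃ f' : X → E, VanishesAtInftyAlong π f' ∧ ∀ x, ‖f x - f' x‖ ≤ ε) :
    VanishesAtInftyAlong π f := fun ε hε ↦ by
  obtain ⟨f', hf', hclose⟩ := h (ε / 2) (half_pos hε)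
  refine (hf' _ (half_pos hε)).of_isClosed_subset isClosed_closure
    (closure_mono (image_mono fun x (hx : ε ≤ ‖f x‖) ↦ ?_))
  show ε / 2 ≤ ‖f' x‖
  linarith [hclose x, norm_sub_norm_le (f x) (f' x)]

theorem exists_norm_le (hf : VanishesAtInftyAlong π f) {φ : Y → ℝ} (hφ : Continuous φ)
    (hfφ : ∀ x, ‖f x‖ = φ (π x)) : ∃ C, ∀ x, ‖f x‖ ≤ C := by
  obtain ⟨C, hC⟩ := ((hf 1 one_pos).image hφ).bddAbove
  refine ⟨max C 1, fun x ↦ ?_⟩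
  rcases le_or_gt 1 ‖f x‖ with h1 | h1
  · exact le_max_of_le_left <| hC ⟨π x, subset_closure ⟨x, h1, rfl⟩, (hfφ x).symm⟩
  · exact le_max_of_le_right h1.le

theorem comp_equiv (hf : VanishesAtInftyAlong π f) (φ : X ≃ X) (ψ : Y ≃ₜ Y)
    (hπ : ∀ x, π (φ x) = ψ (π x)) : VanishesAtInftyAlong π (f ∘ φ) := fun ε hε ↦ by
  have himage : π '' {x | ε ≤ ‖(f ∘ φ) x‖} = ψ.symm '' (π '' {x | ε ≤ ‖f x‖}) := by
    ext y
    constructor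
    · rintro ⟨x, hx, rfl⟩
      exact ⟨π (φ x), ⟨φ x, hx, rfl⟩, by rw [hπ, ψ.symm_apply_apply]⟩
    · rintro ⟨_, ⟨x, hx, rfl⟩, rfl⟩
      refine ⟨φ.symm x, by simpa using hx, ?_⟩
      rw [ψ.eq_symm_apply, ← hπ, φ.apply_symm_apply]
  rw [himage, ← ψ.symm.image_closure]
  exact (hf ε hε).image ψ.symm.continuous

end VanishesAtInftyAlong

end

section InducedAlgebra

variable {G B : Type*} [Group G] [TopologicalSpace G] {H : Subgroup G}
  [NormedRing B] [NormedAlgebra ℂ B] {ρ : H →* (B ≃ₐ[ℂ] B)}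

variable (ρ) in
/-- Membership in `Ind_H^G B`. -/
def IsInducedFun (f : G → B) : Prop :=
  Continuous f ∧ (∀ (g : G) (h : H), f (g * (h : G)⁻¹) = ρ h (f g)) ∧
    VanishesAtInftyAlong (QuotientGroup.mk : G → G ⧸ H) f

namespace IsInducedFun

variable {f f₁ f₂ : G → B}

theorem norm_mul_of_mem (hiso : ∀ (h : H) (b : B), ‖ρ h b‖ = ‖b‖) (hf : IsInducedFun ρ f)
    (g : G) {h : G} (hh : h ∈ H) : ‖f (g * h)‖ = ‖f g‖ := by
  have hequiv := hf.2.1 g ⟨h, hh⟩⁻¹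
  rw [Subgroup.coe_inv, inv_inv] at hequiv
  rw [hequiv, hiso]

theorem exists_norm_le (hiso : ∀ (h : H) (b : B), ‖ρ h b‖ = ‖b‖) (hf : IsInducedFun ρ f) :
    ∃ C, ∀ g, ‖f g‖ ≤ C := by
  have hcoset : ∀ a b : G, QuotientGroup.leftRel H a b → ‖f a‖ = ‖f b‖ := fun a b hab ↦ by
    rw [← mul_inv_cancel_left a b, hf.norm_mul_of_mem hiso a (QuotientGroup.leftRel_apply.mp hab)]
  exact hf.2.2.exists_norm_le (hf.1.norm.quotient_lift hcoset) fun _ ↦ rfl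

theorem add (hf₁ : IsInducedFun ρ f₁) (hf₂ : IsInducedFun ρ f₂) : IsInducedFun ρ (f₁ + f₂) :=
  ⟨hf₁.1.add hf₂.1, fun g h ↦ by simp only [Pi.add_apply, hf₁.2.1, hf₂.2.1, map_add],
    hf₁.2.2.add hf₂.2.2⟩

theorem mul (hiso : ∀ (h : H) (b : B), ‖ρ h b‖ = ‖b‖) (hf₁ : IsInducedFun ρ f₁)
    (hf₂ : IsInducedFun ρ f₂) : IsInducedFun ρ (f₁ * f₂) := by
  obtain ⟨C, hC⟩ := hf₁.exists_norm_le hiso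
  refine ⟨hf₁.1.mul hf₂.1, fun g h ↦ by simp only [Pi.mul_apply, hf₁.2.1, hf₂.2.1, map_mul],
    hf₂.2.2.of_norm_le_mul C fun g ↦ ?_⟩
  exact (norm_mul_le _ _).trans (mul_le_mul_of_nonneg_right (hC g) (norm_nonneg _))

theorem const_smul (hf : IsInducedFun ρ f) (c : ℂ) : IsInducedFun ρ (c • f) :=
  ⟨hf.1.const_smul c, fun g h ↦ by simp only [Pi.smul_apply, hf.2.1, map_smul],
    hf.2.2.of_norm_le_mul ‖c‖ fun g ↦ (norm_smul c (f g)).le⟩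

theorem of_forall_dist_le (hiso : ∀ (h : H) (b : B), ‖ρ h b‖ = ‖b‖) (hf : Continuous f)
    (happrox : ∀ ε > 0, ∃ f', IsInducedFun ρ f' ∧ ∀ g, ‖f g - f' g‖ ≤ ε) :
    IsInducedFun ρ f := by
  refine ⟨hf, fun g h ↦ eq_of_forall_dist_le fun ε hε ↦ ?_,
    .of_forall_dist_le fun ε hε ↦ (happrox ε hε).imp fun f' hf' ↦ ⟨hf'.1.2.2, hf'.2⟩⟩
  obtain ⟨f', hf', hclose⟩ := happrox (ε / 2) (half_pos hε)
  calc dist (f (g * (h : G)⁻¹)) (ρ h (f g))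
      ≤ dist (f (g * (h : G)⁻¹)) (f' (g * (h : G)⁻¹)) + dist (ρ h (f' g)) (ρ h (f g)) := by
        rw [← hf'.2.1 g h]; exact dist_triangle _ _ _
    _ = dist (f (g * (h : G)⁻¹)) (f' (g * (h : G)⁻¹)) + dist (f g) (f' g) := by
        rw [dist_eq_norm (ρ h _), ← map_sub, hiso, ← dist_eq_norm, dist_comm (f' g)]
    _ ≤ ε / 2 + ε / 2 := by
        rw [dist_eq_norm, dist_eq_norm]; exact add_le_add (hclose _) (hclose g)
    _ = ε := add_halves ε

theorem comp_mul_left [ContinuousMul G] (hf : IsInducedFun ρ f) (g₀ : G) :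
    IsInducedFun ρ fun g ↦ f (g₀ * g) :=
  ⟨hf.1.comp (continuous_const_mul g₀), fun g h ↦ by
    simpa only [mul_assoc] using hf.2.1 (g₀ * g) h,
    hf.2.2.comp_equiv (Equiv.mulLeft g₀) (Homeomorph.smul g₀) fun _ ↦ rfl⟩

end IsInducedFun

end InducedAlgebra

theorem induced_algebra_closed_subalgebra_and_action_general
    {G : Type*} [Group G] [TopologicalSpace G] [IsTopologicalGroup G]
    (H : Subgroup G)
    {B : Type*} [NormedRing B] [NormedAlgebra ℂ B]
    (ρ : H →* (B ≃ₐ[ℂ] B)) (hiso : ∀ (h : H) (b : B), ‖ρ h b‖ = ‖b‖) :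
    let P : (G → B) → Prop := fun f =>
      Continuous f ∧ (∀ (g : G) (h : H), f (g * (h : G)⁻¹) = ρ h (f g)) ∧
      (∀ ε > 0, IsCompact (closure ((QuotientGroup.mk : G → G ⧸ H) '' {g | ε ≤ ‖f g‖})))
    -- membership forces boundedness, so `Ind_H^G B` sits inside the bounded continuous functions
    (∀ f, P f → ∃ C : ℝ, ∀ g, ‖f g‖ ≤ C) ∧
    -- subalgebra: closed under the (pointwise) algebra operations
    (∀ f₁ f₂, P f₁ → P f₂ → P (f₁ + f₂) ∧ P (f₁ * f₂)) ∧
    (∀ (c : ℂ) f, P f → P (c • f)) ∧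
    -- closed for the supremum norm: uniform limits of members are members
    (∀ f : G → B, Continuous f → (∃ C : ℝ, ∀ g, ‖f g‖ ≤ C) →
      (∀ ε > 0, ∃ f', P f' ∧ ∀ g, ‖f g - f' g‖ ≤ ε) → P f) ∧
    -- the translation action preserves `Ind_H^G B` ...
    (∀ (g₀ : G) (f), P f → P (fun g => f (g₀⁻¹ * g))) ∧
    -- ... is isometric for the supremum norm ...
    (∀ (g₀ : G) (f), P f → (⨆ g, ‖f (g₀⁻¹ * g)‖) = ⨆ g, ‖f g‖) ∧
    -- ... acts by algebra automorphisms ...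
    (∀ (g₀ : G) (f₁ f₂ : G → B),
      (fun g => (f₁ + f₂) (g₀⁻¹ * g)) = (fun g => f₁ (g₀⁻¹ * g)) + (fun g => f₂ (g₀⁻¹ * g)) ∧
      (fun g => (f₁ * f₂) (g₀⁻¹ * g)) = (fun g => f₁ (g₀⁻¹ * g)) * (fun g => f₂ (g₀⁻¹ * g)) ∧
      ∀ c : ℂ, (fun g => (c • f₁) (g₀⁻¹ * g)) = c • (fun g => f₁ (g₀⁻¹ * g))) ∧
    -- ... and is a group action
    (∀ (g₁ g₂ : G) (f : G → B),
      (fun g => f ((g₁ * g₂)⁻¹ * g)) = (fun g => (fun g' => f (g₂⁻¹ * g')) (g₁⁻¹ * g)) ∧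
      (fun g => f ((1 : G)⁻¹ * g)) = f) := by
  intro P
  refine ⟨fun f hf ↦ IsInducedFun.exists_norm_le hiso hf,
    fun f₁ f₂ hf₁ hf₂ ↦ ⟨IsInducedFun.add hf₁ hf₂, IsInducedFun.mul hiso hf₁ hf₂⟩,
    fun c f hf ↦ IsInducedFun.const_smul hf c,
    fun f hf _ happrox ↦ IsInducedFun.of_forall_dist_le hiso hf happrox,
    fun g₀ f hf ↦ IsInducedFun.comp_mul_left hf g₀⁻¹,
    fun g₀ f _ ↦ congrArg sSup ((Equiv.mulLeft g₀⁻¹).surjective.range_comp fun g ↦ ‖f g‖),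
    fun _ _ _ ↦ ⟨rfl, rfl, fun _ ↦ rfl⟩,
    fun g₁ g₂ f ↦ ⟨?_, ?_⟩⟩ <;> funext g
  · rw [mul_inv_rev, mul_assoc]
  · rw [inv_one, one_mul]

/-- The induced algebra `Ind_H^G B`: the set of continuous `f : G → B` with
`f(g h⁻¹) = h · f(g)` whose norm function vanishes at infinity on `G/H` consists of
bounded functions, is closed under the algebra operations and uniform limits (i.e. it is
a closed subalgebra of the bounded continuous `B`-valued functions), and
`(g·f)(g') = f(g⁻¹ g')` defines a `G`-action on it by isometric algebra automorphisms. -/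
theorem induced_algebra_closed_subalgebra_and_action
    {G : Type*} [Group G] [TopologicalSpace G] [IsTopologicalGroup G]
    (H : Subgroup G) (hH : IsClosed (H : Set G))
    {B : Type*} [NormedRing B] [NormedAlgebra ℂ B] [CompleteSpace B]
    (ρ : H →* (B ≃ₐ[ℂ] B)) (hiso : ∀ (h : H) (b : B), ‖ρ h b‖ = ‖b‖) :
    let P : (G → B) → Prop := fun f =>
      Continuous f ∧ (∀ (g : G) (h : H), f (g * (h : G)⁻¹) = ρ h (f g)) ∧
      (∀ ε > 0, IsCompact (closure ((QuotientGroup.mk : G → G ⧸ H) '' {g | ε ≤ ‖f g‖})))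
    -- membership forces boundedness, so `Ind_H^G B` sits inside the bounded continuous functions
    (∀ f, P f → ∃ C : ℝ, ∀ g, ‖f g‖ ≤ C) ∧
    -- subalgebra: closed under the (pointwise) algebra operations
    (∀ f₁ f₂, P f₁ → P f₂ → P (f₁ + f₂) ∧ P (f₁ * f₂)) ∧
    (∀ (c : ℂ) f, P f → P (c • f)) ∧
    -- closed for the supremum norm: uniform limits of members are members
    (∀ f : G → B, Continuous f → (∃ C : ℝ, ∀ g, ‖f g‖ ≤ C) →
      (∀ ε > 0, ∃ f', P f' ∧ ∀ g, ‖f g - f' g‖ ≤ ε) → P f) ∧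
    -- the translation action preserves `Ind_H^G B` ...
    (∀ (g₀ : G) (f), P f → P (fun g => f (g₀⁻¹ * g))) ∧
    -- ... is isometric for the supremum norm ...
    (∀ (g₀ : G) (f), P f → (⨆ g, ‖f (g₀⁻¹ * g)‖) = ⨆ g, ‖f g‖) ∧
    -- ... acts by algebra automorphisms ...
    (∀ (g₀ : G) (f₁ f₂ : G → B),
      (fun g => (f₁ + f₂) (g₀⁻¹ * g)) = (fun g => f₁ (g₀⁻¹ * g)) + (fun g => f₂ (g₀⁻¹ * g)) ∧
      (fun g => (f₁ * f₂) (g₀⁻¹ * g)) = (fun g => f₁ (g₀⁻¹ * g)) * (fun g => f₂ (g₀⁻¹ * g)) ∧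
      ∀ c : ℂ, (fun g => (c • f₁) (g₀⁻¹ * g)) = c • (fun g => f₁ (g₀⁻¹ * g))) ∧
    -- ... and is a group action
    (∀ (g₁ g₂ : G) (f : G → B),
      (fun g => f ((g₁ * g₂)⁻¹ * g)) = (fun g => (fun g' => f (g₂⁻¹ * g')) (g₁⁻¹ * g)) ∧
      (fun g => f ((1 : G)⁻¹ * g)) = f) :=
  induced_algebra_closed_subalgebra_and_action_general H ρ hiso
end
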